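/- On the open set {(S,I) ∈ ℝ² : S + I ≠ 0, S ≠ 0, I ≠ 0}, the vector fields X̄₁ = (−SI/(S+I)) ∂/∂S + (SI/(S+I)) ∂/∂I and X̄₂ = (I − SI/(S+I)) ∂/∂S − (I − SI/(S+I)) ∂/∂I satisfy [X̄₁, X̄₂] = X̄₂. -/

import Mathlib

/-!
Both fields are multiples of the constant field `e = ∂_I - ∂_S`: with `φ = SI/(S+I)`,
`X̄₁ = φ e` and `X̄₂ = (φ - I) e`. For such fields `[f e, g e] = (f e(g) - g e(f)) e`, and since
`S + I` is constant along `e`, `e(φ) = (S - I)/(S + I)`. The claim then reduces to the identity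
`I (S - I)/(S + I) = 2φ - I`.
-/

/-- Lie bracket of vector fields on an open subset of ℝ², identified with
coefficient functions `(S,I) ↦ (f(S,I), g(S,I))`. -/
noncomputable def vbr (X Y : ℝ × ℝ → ℝ × ℝ) : ℝ × ℝ → ℝ × ℝ :=
  fun p => fderiv ℝ Y p (X p) - fderiv ℝ X p (Y p)

theorem vbr_smul_const {f g : ℝ × ℝ → ℝ} {p : ℝ × ℝ} (hf : DifferentiableAt ℝ f p)
    (hg : DifferentiableAt ℝ g p) (v : ℝ × ℝ) :
    vbr (fun z => f z • v) (fun z => g z • v) p =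
      (f p * fderiv ℝ g p v - g p * fderiv ℝ f p v) • v := by
  simp only [vbr, fderiv_smul_const hf, fderiv_smul_const hg,
    ContinuousLinearMap.smulRight_apply, map_smul, mul_smul, sub_smul]

theorem fderiv_mul_div_add_apply {z : ℝ × ℝ} (h : z.1 + z.2 ≠ 0) :
    fderiv ℝ (fun w : ℝ × ℝ => w.1 * w.2 / (w.1 + w.2)) z (-1, 1) =
      (z.1 - z.2) / (z.1 + z.2) := by
  have hd : DifferentiableAt ℝ (fun w : ℝ × ℝ => w.1 * w.2 / (w.1 + w.2)) z := by
    fun_prop (disch := exact h)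
  rw [← hd.lineDeriv_eq_fderiv]
  apply HasLineDerivAt.lineDeriv
  have hpoly : HasDerivAt (fun t : ℝ => (z.1 - t) * (z.2 + t) / (z.1 + z.2))
      ((z.1 - z.2) / (z.1 + z.2)) 0 := by
    refine ((((hasDerivAt_id (0:ℝ)).const_sub z.1).mul
      ((hasDerivAt_id (0:ℝ)).const_add z.2)).div_const (z.1 + z.2)).congr_deriv ?_
    simp only [id, sub_zero, add_zero]
    ring
  refine hpoly.congr_of_eventuallyEq (.of_forall fun t => ?_)
  simp only [Prod.fst_add, Prod.snd_add, Prod.smul_mk, smul_eq_mul]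
  congr 1 <;> ring

/-- On `{(S,I) : S + I ≠ 0, S ≠ 0, I ≠ 0}`, the SIS vector fields
`X̄₁ = (−SI/(S+I)) ∂_S + (SI/(S+I)) ∂_I` and
`X̄₂ = (I − SI/(S+I)) ∂_S − (I − SI/(S+I)) ∂_I` satisfy `[X̄₁, X̄₂] = X̄₂`. -/
theorem stmt_8 :
    let X₁ : ℝ × ℝ → ℝ × ℝ := fun z =>
      (-(z.1 * z.2) / (z.1 + z.2), z.1 * z.2 / (z.1 + z.2))
    let X₂ : ℝ × ℝ → ℝ × ℝ := fun z =>
      (z.2 - z.1 * z.2 / (z.1 + z.2), -(z.2 - z.1 * z.2 / (z.1 + z.2)))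
    ∀ z : ℝ × ℝ, z.1 + z.2 ≠ 0 → z.1 ≠ 0 → z.2 ≠ 0 →
      vbr X₁ X₂ z = X₂ z := by
  intro X₁ X₂ z h _ _
  set φ : ℝ × ℝ → ℝ := fun w => w.1 * w.2 / (w.1 + w.2) with hφ
  have hX₁ : X₁ = fun w => φ w • ((-1, 1) : ℝ × ℝ) := by
    funext w; simp [X₁, φ, neg_div]
  have hX₂ : X₂ = fun w => (φ w - w.2) • ((-1, 1) : ℝ × ℝ) := by
    funext w; simp [X₂, φ]
  have hφd : DifferentiableAt ℝ φ z := by fun_prop (disch := exact h)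
  have hgd : DifferentiableAt ℝ (fun w : ℝ × ℝ => φ w - w.2) z := hφd.sub differentiableAt_snd
  rw [hX₂, hX₁, vbr_smul_const hφd hgd, fderiv_fun_sub hφd differentiableAt_snd,
    sub_apply, fderiv_snd, ContinuousLinearMap.coe_snd', hφ,
    fderiv_mul_div_add_apply h]
  congr 1
  field_simp
  ring
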